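/- arXiv:1303.5969 — 2 statements merged into one kernel-verified Lean document; each statement's English description precedes it below -/
import Mathlib

section
/- Let λ be a p-restricted partition. Then each nonempty ladder of λ is 'unbroken': the set of row indices of nodes in any ladder L_b of λ is an interval {q, q+1, ..., r} of consecutive integers. -/
/-- The Young diagram of a partition `μ : ℕ → ℕ` (rows indexed from 1). -/
def youngDiagram (μ : ℕ → ℕ) : Set (ℕ × ℕ) :=
  {x | 1 ≤ x.1 ∧ 1 ≤ x.2 ∧ x.2 ≤ μ x.1}

/-- The ladder `L_b` of a partition: nodes `(i, j)` with `j + (p-1)(i-1) = b`. -/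
def ladder (p : ℕ) (μ : ℕ → ℕ) (b : ℕ) : Set (ℕ × ℕ) :=
  {x ∈ youngDiagram μ | x.2 + (p - 1) * (x.1 - 1) = b}

/-- Each ladder of a `p`-restricted partition is unbroken: the set of row indices of
its nodes is an interval of consecutive integers. -/
theorem stmt_5 (p : ℕ) (hp : 2 ≤ p)
    (μ : ℕ → ℕ)
    (hmono : ∀ i, 1 ≤ i → μ (i + 1) ≤ μ i)
    (hres : ∀ i, 1 ≤ i → μ i - μ (i + 1) < p) :
    ∀ b i₁ i₂ i, (∃ j, ((i₁, j) : ℕ × ℕ) ∈ ladder p μ b) →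
      (∃ j, ((i₂, j) : ℕ × ℕ) ∈ ladder p μ b) →
      i₁ ≤ i → i ≤ i₂ → ∃ j, ((i, j) : ℕ × ℕ) ∈ ladder p μ b := by
  intro b i₁ i₂ i h1 h2 hle1 hle2
  obtain ⟨j₂, ⟨⟨hi₂1, hj₂1, hj₂2⟩, heq₂⟩⟩ := h2
  induction i, hle1 using Nat.le_induction with
  | base => exact h1
  | succ i hi ih =>
    obtain ⟨j, ⟨⟨hi1, hj1, hj2⟩, heq⟩⟩ := ih (le_trans (Nat.le_succ i) hle2)
    simp only [ladder, youngDiagram, Set.mem_setOf_eq] at heq heq₂ ⊢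
    simp only at hi1 hj1 hj2 hi₂1 hj₂1 hj₂2
    -- abbreviations for the products
    set q := p - 1 with hq
    have hii₂ : i + 1 ≤ i₂ := hle2
    have hprod : q * (i - 1) + q ≤ q * (i₂ - 1) := by
      have : i - 1 + 1 ≤ i₂ - 1 := by omega
      calc q * (i - 1) + q = q * (i - 1 + 1) := by ring
        _ ≤ q * (i₂ - 1) := Nat.mul_le_mul_left q this
    have hqi : q * ((i + 1) - 1) = q * (i - 1) + q := by
      have h : i = (i - 1) + 1 := by omega
      rw [Nat.add_sub_cancel]; nth_rewrite 1 [h]; ring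
    -- from the two ladder equations, j ≥ q + 1
    have hjq : q + 1 ≤ j := by omega
    have hmono' := hmono i hi1
    have hres' := hres i hi1
    refine ⟨j - q, ⟨⟨by omega, by omega, by omega⟩, by omega⟩⟩
end

section
/- In the group algebra ℤS_n, the Jucys-Murphy elements L_k = (1,k) + (2,k) + ... + (k-1,k), for k = 1, ..., n (with L₁ = 0), pairwise commute: L_j L_k = L_k L_j for all j, k. -/
open MonoidAlgebra

/-- The Jucys-Murphy element `L_k = Σ_{i < k} (i,k)` in `ℤ S_n`. -/
noncomputable def jucysMurphy (n : ℕ) (k : Fin n) :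
    MonoidAlgebra ℤ (Equiv.Perm (Fin n)) :=
  ∑ i ∈ Finset.univ.filter (· < k), MonoidAlgebra.of ℤ (Equiv.Perm (Fin n)) (Equiv.swap i k)

/-!
Conjugating a transposition `(i,k)` by a permutation `σ` fixing `k` gives `(σ i, k)`, so the
sum of the `(i,k)` over a set `s` of letters is centralised by every `σ` that fixes `k` and moves
only letters of `s`. For `j < k`, every summand `(i,j)` of `L_j` is such a permutation with
`s = {i | i < k}`, hence commutes with `L_k`.
-/

theorem commute_of_sum_swap {R α : Type*} [Semiring R] [DecidableEq α] (s : Finset α) (k : α)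
    (hk : k ∉ s) (σ : Equiv.Perm α) (hσ : {a | σ a ≠ a} ⊆ s) :
    Commute (of R _ σ) (∑ i ∈ s, of R _ (Equiv.swap i k)) := by
  have hσk : σ k = k := by_contra fun h => hk (hσ h)
  calc of R _ σ * ∑ i ∈ s, of R _ (Equiv.swap i k)
      = ∑ i ∈ s, of R _ (Equiv.swap (σ i) k) * of R _ σ := by
        simp only [Finset.mul_sum, ← map_mul, Equiv.mul_swap_eq_swap_mul, hσk]
    _ = (∑ i ∈ s, of R _ (Equiv.swap i k)) * of R _ σ := by
        rw [Equiv.Perm.sum_comp σ s (fun i => of R _ (Equiv.swap i k) * of R _ σ) hσ,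
          Finset.sum_mul]

theorem jucysMurphy_commute_of_lt (n : ℕ) {j k : Fin n} (hjk : j < k) :
    Commute (jucysMurphy n j) (jucysMurphy n k) := by
  refine Commute.sum_left _ _ _ fun i hi => commute_of_sum_swap _ k (by simp) _ ?_
  intro a ha
  have hij : i < j := by simpa using hi
  have : a = i ∨ a = j := by
    by_contra! h
    exact ha (Equiv.swap_apply_of_ne_of_ne h.1 h.2)
  rcases this with rfl | rfl <;> simp [hij.trans hjk, hjk]

theorem stmt_6 (n : ℕ) (j k : Fin n) :
    jucysMurphy n j * jucysMurphy n k = jucysMurphy n k * jucysMurphy n j := by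
  rcases lt_trichotomy j k with h | rfl | h
  · exact jucysMurphy_commute_of_lt n h
  · rfl
  · exact (jucysMurphy_commute_of_lt n h).symm
end
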